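/- arXiv:1907.04687 — 6 statements merged into one kernel-verified Lean document; each statement's English description precedes it below -/
import Mathlib

section
/- For 0 < |q| < 1 and |z| < 1, the infinite product H_q(z) = ∏_{i=0}^∞ (1 - q^i z)^{-1} equals the sum ∑_{n=0}^∞ z^n / (q;q)_n, where (q;q)_n = ∏_{k=1}^n (1 - q^k) is the q-Pochhammer symbol. -/
/-!
Euler's series `e_q(w) = ∑ wⁿ / (q;q)ₙ` satisfies `(1 - w) e_q(w) = e_q(q w)`, so iterating,
`e_q(z) = (∏_{i<N} (1 - qⁱ z)⁻¹) e_q(qᴺ z)`. Since `1 / (q;q)ₙ` are the partial products of the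
convergent product `∏ (1 - qᵏ⁺¹)⁻¹`, they are bounded; so the series converges uniformly near `0`,
`e_q` is continuous at `0` with `e_q(0) = 1`, and letting `N → ∞` gives `e_q(z) = ∏ (1 - qⁱ z)⁻¹`.
-/

open Finset Filter Topology

variable {𝕜 : Type*} [NormedField 𝕜] {q z w : 𝕜}

/-- The `q`-Pochhammer symbol `(q;q)ₙ`. -/
def qPochhammer (q : 𝕜) (n : ℕ) : 𝕜 := ∏ k ∈ range n, (1 - q ^ (k + 1))

noncomputable def qExp (q w : 𝕜) : 𝕜 := ∑' n, w ^ n / qPochhammer q n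

lemma qPochhammer_succ (q : 𝕜) (n : ℕ) :
    qPochhammer q (n + 1) = qPochhammer q n * (1 - q ^ (n + 1)) :=
  prod_range_succ _ _

lemma one_sub_ne_zero_of_norm_lt_one (hw : ‖w‖ < 1) : 1 - w ≠ 0 := by
  rw [sub_ne_zero]
  rintro rfl
  simp at hw

lemma norm_pow_mul_lt_one (hq : ‖q‖ ≤ 1) (hz : ‖z‖ < 1) (i : ℕ) : ‖q ^ i * z‖ < 1 := by
  rw [norm_mul, norm_pow]
  exact lt_of_le_of_lt (mul_le_of_le_one_left (norm_nonneg z) (pow_le_one₀ (norm_nonneg q) hq)) hz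

lemma qExp_zero (q : 𝕜) : qExp q 0 = 1 := by
  rw [qExp, tsum_eq_single 0 fun n hn => by simp [hn]]
  simp [qPochhammer]

variable [CompleteSpace 𝕜]

lemma multipliable_inv_one_sub_pow_mul (hq : ‖q‖ < 1) (hz : ‖z‖ < 1) :
    Multipliable fun i : ℕ => (1 - q ^ i * z)⁻¹ := by
  have hsum : Summable fun i : ℕ => ‖-(q ^ i * z)‖ := by
    simpa [norm_pow, norm_mul] using
      (summable_geometric_of_lt_one (norm_nonneg q) hq).mul_right ‖z‖
  have hne : ∀ i : ℕ, 1 + -(q ^ i * z) ≠ 0 := fun i => by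
    rw [← sub_eq_add_neg]
    exact one_sub_ne_zero_of_norm_lt_one (norm_pow_mul_lt_one hq.le hz i)
  simpa [← sub_eq_add_neg] using
    (multipliable_one_add_of_summable hsum).inv₀ (tprod_one_add_ne_zero_of_summable hne hsum)

lemma exists_forall_norm_inv_qPochhammer_le (hq : ‖q‖ < 1) :
    ∃ C, ∀ n, ‖(qPochhammer q n)⁻¹‖ ≤ C := by
  have hlim := (multipliable_inv_one_sub_pow_mul hq hq).hasProd.tendsto_prod_nat
  obtain ⟨C, hC⟩ := isBounded_iff_forall_norm_le.1 (Metric.isBounded_range_of_tendsto _ hlim)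
  refine ⟨C, fun n => ?_⟩
  simpa [qPochhammer, prod_inv_distrib, pow_succ] using hC _ (Set.mem_range_self n)

lemma summable_pow_div_qPochhammer (hq : ‖q‖ < 1) (hw : ‖w‖ < 1) :
    Summable fun n => w ^ n / qPochhammer q n := by
  obtain ⟨C, hC⟩ := exists_forall_norm_inv_qPochhammer_le hq
  refine Summable.of_norm_bounded ((summable_geometric_of_lt_one (norm_nonneg w) hw).mul_left C)
    fun n => ?_
  rw [div_eq_mul_inv, norm_mul, norm_pow, mul_comm]
  exact mul_le_mul_of_nonneg_right (hC n) (by positivity)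

lemma continuousAt_qExp_zero (hq : ‖q‖ < 1) : ContinuousAt (qExp q) 0 := by
  obtain ⟨C, hC⟩ := exists_forall_norm_inv_qPochhammer_le hq
  have hcont : ContinuousOn (qExp q) (Metric.closedBall 0 (1 / 2)) := by
    refine continuousOn_tsum (fun n => by fun_prop)
      (summable_geometric_two.mul_left C) fun n w hw => ?_
    rw [mem_closedBall_zero_iff] at hw
    rw [div_eq_mul_inv, norm_mul, norm_pow, mul_comm]
    exact mul_le_mul (hC n) (pow_le_pow_left₀ (norm_nonneg w) hw n) (by positivity)
      ((norm_nonneg _).trans (hC n))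
  exact hcont.continuousAt (Metric.closedBall_mem_nhds 0 (by norm_num))

lemma one_sub_mul_qExp (hq : ‖q‖ < 1) (hw : ‖w‖ < 1) :
    (1 - w) * qExp q w = qExp q (q * w) := by
  have hqw : ‖q * w‖ < 1 := by simpa using norm_pow_mul_lt_one hq.le hw 1
  have hterm : ∀ n : ℕ, w ^ (n + 1) / qPochhammer q (n + 1) - (q * w) ^ (n + 1) /
      qPochhammer q (n + 1) = w * (w ^ n / qPochhammer q n) := fun n => by
    have hfactor : 1 - q ^ (n + 1) ≠ 0 := by
      simpa [pow_succ] using one_sub_ne_zero_of_norm_lt_one (norm_pow_mul_lt_one hq.le hq n)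
    rw [div_sub_div_same, qPochhammer_succ, mul_pow, ← one_sub_mul, mul_comm (1 - _),
      mul_div_mul_right _ _ hfactor, pow_succ', mul_div_assoc]
  have hdiff : qExp q w - qExp q (q * w) = w * qExp q w := by
    have hs := summable_pow_div_qPochhammer hq hw
    have hs' := summable_pow_div_qPochhammer hq hqw
    rw [qExp, qExp, ← hs.tsum_sub hs', (hs.sub hs').tsum_eq_zero_add]
    simp only [pow_zero, sub_self, zero_add, hterm, tsum_mul_left]
  linear_combination hdiff

lemma qExp_eq_prod_range_mul (hq : ‖q‖ < 1) (hz : ‖z‖ < 1) (N : ℕ) :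
    qExp q z = (∏ i ∈ range N, (1 - q ^ i * z)⁻¹) * qExp q (q ^ N * z) := by
  induction N with
  | zero => simp
  | succ N ih =>
    have hstep : qExp q (q ^ N * z) = (1 - q ^ N * z)⁻¹ * qExp q (q ^ (N + 1) * z) := by
      rw [eq_inv_mul_iff_mul_eq₀ (one_sub_ne_zero_of_norm_lt_one (norm_pow_mul_lt_one hq.le hz N)),
        one_sub_mul_qExp hq (norm_pow_mul_lt_one hq.le hz N), pow_succ', mul_assoc]
    rw [ih, hstep, prod_range_succ, mul_assoc]

lemma qExp_eq_tprod (hq : ‖q‖ < 1) (hz : ‖z‖ < 1) :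
    qExp q z = ∏' i : ℕ, (1 - q ^ i * z)⁻¹ := by
  have hsmall : Tendsto (fun N => qExp q (q ^ N * z)) atTop (𝓝 1) := by
    have hzero : Tendsto (fun N => q ^ N * z) atTop (𝓝 0) := by
      simpa using (tendsto_pow_atTop_nhds_zero_of_norm_lt_one hq).mul_const z
    rw [← qExp_zero q]
    exact (continuousAt_qExp_zero hq).tendsto.comp hzero
  have hlim := (multipliable_inv_one_sub_pow_mul hq hz).hasProd.tendsto_prod_nat.mul hsmall
  simp_rw [← qExp_eq_prod_range_mul hq hz, mul_one] at hlim
  exact tendsto_nhds_unique tendsto_const_nhds hlim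

theorem quantum_exponential_product_eq_sum_general (q z : ℂ)
    (hq1 : ‖q‖ < 1)
    (hz : ‖z‖ < 1) :
    Multipliable (fun i : ℕ => (1 - q ^ i * z)⁻¹) ∧
    Summable (fun n : ℕ => z ^ n / ∏ k ∈ Finset.range n, (1 - q ^ (k + 1))) ∧
    ∏' i : ℕ, (1 - q ^ i * z)⁻¹
      = ∑' n : ℕ, z ^ n / ∏ k ∈ Finset.range n, (1 - q ^ (k + 1)) :=
  ⟨multipliable_inv_one_sub_pow_mul hq1 hz, summable_pow_div_qPochhammer hq1 hz,
    (qExp_eq_tprod hq1 hz).symm⟩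

/-- Euler's identity for the quantum exponential generating function:
for `0 < |q| < 1` and `|z| < 1`, `∏_{i≥0} (1 - qⁱ z)⁻¹ = ∑_{n≥0} zⁿ / (q;q)_n`,
where `(q;q)_n = ∏_{k=1}^n (1 - q^k)`. -/
theorem quantum_exponential_product_eq_sum (q z : ℂ)
    (hq0 : 0 < ‖q‖) (hq1 : ‖q‖ < 1)
    (hz : ‖z‖ < 1) :
    Multipliable (fun i : ℕ => (1 - q ^ i * z)⁻¹) ∧
    Summable (fun n : ℕ => z ^ n / ∏ k ∈ Finset.range n, (1 - q ^ (k + 1))) ∧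
    ∏' i : ℕ, (1 - q ^ i * z)⁻¹
      = ∑' n : ℕ, z ^ n / ∏ k ∈ Finset.range n, (1 - q ^ (k + 1)) :=
  quantum_exponential_product_eq_sum_general q z hq1 hz
end

section
/- Let 0 < q < 1 and β < 0, and define r_i = β H_q(iβ) for i ∈ ℤ and ρ_j = ∏_{l=1}^j r_l for j ≥ 1 (ρ_0 = 1). Then ρ_j → 0 as j → ∞; in fact log|ρ_j| = j·log²(j)/(2 log q) + O(j log j), which tends to −∞ since log q < 0. -/
/-- `H_q(x) = ∏_{m≥0} (1 - q^m x)⁻¹` (real version). -/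
noncomputable def Hq (q x : ℝ) : ℝ := ∏' m : ℕ, (1 - q ^ m * x)⁻¹

/-- `ρ_j = ∏_{l=1}^j β H_q(lβ)`. -/
noncomputable def rhoSeq (q β : ℝ) (j : ℕ) : ℝ :=
  ∏ l ∈ Finset.Icc 1 j, (β * Hq q ((l : ℝ) * β))

/-!
Write `b = -β`, `c = -log q` and `S(t) = ∑ₘ log (1 + qᵐ t)`, so that
`|r_l| = b · exp (-S (l b))`. The terms of `S(t)` are `log⁺ t - m c + O(1)` for the
`≈ log⁺ t / c` indices with `qᵐ t ≥ 1`, and form a geometrically decaying tail afterwards;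
hence `S(t) = (log⁺ t)² / (2c) + O(log⁺ t + 1)`. Summing over `l ≤ j`, and comparing
`∑ log² l` with `j log² j` by Stirling's bound on `log j!`, gives
`log |ρ_j| = -j log² j / (2c) + O(j log j)`.
-/

open Real Filter Finset
open scoped Nat

noncomputable def logQPoch (q t : ℝ) : ℝ := ∑' m : ℕ, log (1 + q ^ m * t)

lemma summable_log_one_add_pow_mul {q : ℝ} (hq0 : 0 ≤ q) (hq1 : q < 1) (t : ℝ) :
    Summable fun m : ℕ => log (1 + q ^ m * t) :=
  Real.summable_log_one_add_of_summable ((summable_geometric_of_lt_one hq0 hq1).mul_right t)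

lemma Hq_neg {q t : ℝ} (hq0 : 0 ≤ q) (hq1 : q < 1) (ht : 0 ≤ t) :
    Hq q (-t) = exp (-logQPoch q t) := by
  have hsum : Summable fun m : ℕ => log (1 + q ^ m * t)⁻¹ := by
    simpa only [log_inv] using (summable_log_one_add_pow_mul hq0 hq1 t).neg
  rw [logQPoch, ← tsum_neg, Hq]
  simp_rw [← log_inv, rexp_tsum_eq_tprod (fun m => by positivity) hsum, mul_neg, sub_neg_eq_add]

lemma abs_rhoSeq {q β : ℝ} (hq0 : 0 ≤ q) (hq1 : q < 1) (hβ : β < 0) (j : ℕ) :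
    |rhoSeq q β j| = exp (∑ l ∈ Icc 1 j, (log (-β) - logQPoch q (l * -β))) := by
  rw [rhoSeq, abs_prod, exp_sum]
  refine prod_congr rfl fun l _ => ?_
  have hlβ : 0 ≤ (l : ℝ) * -β := mul_nonneg l.cast_nonneg (by linarith)
  rw [show (l : ℝ) * β = -(l * -β) by ring, Hq_neg hq0 hq1 hlβ, abs_mul, abs_of_neg hβ,
    abs_of_pos (exp_pos _), exp_sub, exp_log (by linarith), exp_neg, div_eq_mul_inv]

lemma sum_range_sub_mul_bounds {a c : ℝ} {n : ℕ} (hc : 0 < c) (h₁ : (n : ℝ) - 1 ≤ a / c)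
    (h₂ : a / c < n) :
    a ^ 2 / (2 * c) + a / 2 ≤ ∑ m ∈ range n, (a - m * c) ∧
      ∑ m ∈ range n, (a - m * c) ≤ a ^ 2 / (2 * c) + a / 2 + c / 8 := by
  have hsum : ∑ m ∈ range n, (a - m * c) = n * a - c * (n * (n - 1) / 2) := by
    clear h₁ h₂
    induction n with
    | zero => simp
    | succ k ih => rw [sum_range_succ, ih]; push_cast; ring
  obtain ⟨u, rfl⟩ : ∃ u, a = c * u := ⟨a / c, by field_simp⟩
  rw [mul_div_cancel_left₀ _ hc.ne'] at h₁ h₂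
  have hsq : (c * u) ^ 2 / (2 * c) = c * u ^ 2 / 2 := by field_simp
  rw [hsum, hsq]
  constructor
  · nlinarith [mul_nonneg hc.le (mul_nonneg (sub_nonneg.2 h₁) (sub_nonneg.2 h₂.le))]
  · nlinarith [mul_nonneg hc.le (sq_nonneg (u - n + 1 / 2))]

lemma posLog_add_mul_log_le_log_one_add {q t : ℝ} (hq0 : 0 < q) (hq1 : q ≤ 1) (ht : 0 < t)
    (m : ℕ) : log⁺ t + m * log q ≤ log (1 + q ^ m * t) := by
  have hmq : m * log q ≤ 0 := mul_nonpos_of_nonneg_of_nonpos m.cast_nonneg (log_nonpos hq0.le hq1)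
  have hx : 0 < q ^ m * t := by positivity
  have hlog : log (q ^ m * t) = log t + m * log q := by
    rw [log_mul (by positivity) ht.ne', log_pow]; ring
  have h₀ : 0 ≤ log (1 + q ^ m * t) := log_nonneg (by linarith)
  have h₁ : log (q ^ m * t) ≤ log (1 + q ^ m * t) := log_le_log hx (by linarith)
  rw [posLog_apply]
  rcases le_total 0 (log t) with h | h
  · rw [max_eq_right h]; linarith
  · rw [max_eq_left h]; linarith

lemma log_one_add_pow_mul_le {q t : ℝ} (hq0 : 0 < q) (ht : 0 < t) (m : ℕ)
    (hm : 0 ≤ log⁺ t + m * log q) : log (1 + q ^ m * t) ≤ log 2 + (log⁺ t + m * log q) := by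
  have hx : 0 < q ^ m * t := by positivity
  have hlog : log (q ^ m * t) = log t + m * log q := by
    rw [log_mul (by positivity) ht.ne', log_pow]; ring
  have hpos : log⁺ (q ^ m * t) ≤ log⁺ t + m * log q := by
    rw [posLog_apply, hlog]
    exact max_le hm (by linarith [le_max_right 0 (log t), posLog_apply (x := t)])
  calc log (1 + q ^ m * t) = log⁺ (1 + q ^ m * t) := (posLog_eq_log (by
          rw [abs_of_pos (by linarith)]; linarith)).symm
    _ ≤ log 2 + log⁺ 1 + log⁺ (q ^ m * t) := posLog_add
    _ ≤ log 2 + (log⁺ t + m * log q) := by rw [posLog_one]; linarith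

lemma tsum_log_one_add_pow_add_mul_le {q t : ℝ} (hq0 : 0 < q) (hq1 : q < 1) (ht : 0 ≤ t)
    {n : ℕ} (hn : q ^ n * t ≤ 1) :
    ∑' i : ℕ, log (1 + q ^ (i + n) * t) ≤ 1 / (1 - q) := by
  rw [one_div, ← tsum_geometric_of_lt_one hq0.le hq1]
  refine Summable.tsum_le_tsum (fun i => ?_)
    ((summable_nat_add_iff n).2 (summable_log_one_add_pow_mul hq0.le hq1 t))
    (summable_geometric_of_lt_one hq0.le hq1)
  have hi : 0 ≤ q ^ (i + n) * t := by positivity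
  calc log (1 + q ^ (i + n) * t) ≤ q ^ (i + n) * t := by
        linarith [log_le_sub_one_of_pos (by linarith : 0 < 1 + q ^ (i + n) * t)]
    _ = q ^ i * (q ^ n * t) := by ring
    _ ≤ q ^ i := mul_le_of_le_one_right (by positivity) hn

lemma abs_logQPoch_sub_le {q t : ℝ} (hq0 : 0 < q) (hq1 : q < 1) (ht : 0 < t) :
    |logQPoch q t - log⁺ t ^ 2 / (2 * -log q)| ≤
      (1 / 2 + log 2 / -log q) * log⁺ t + (-log q / 8 + log 2 + 1 / (1 - q)) := by
  set c := -log q with hc_def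
  have hc : 0 < c := neg_pos.2 (log_neg hq0 hq1)
  set L := log⁺ t
  have hL : 0 ≤ L := posLog_nonneg
  set n := ⌊L / c⌋₊ + 1 with hn_def
  have hn₁ : (n : ℝ) - 1 ≤ L / c := by
    rw [hn_def]; push_cast; linarith [Nat.floor_le (div_nonneg hL hc.le)]
  have hn₂ : L / c < n := by rw [hn_def]; push_cast; exact Nat.lt_floor_add_one _
  have hnc : L < n * c := by rwa [div_lt_iff₀ hc] at hn₂
  obtain ⟨hsum_lo, hsum_hi⟩ := sum_range_sub_mul_bounds hc hn₁ hn₂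
  have hsplit := (summable_log_one_add_pow_mul hq0.le hq1 t).sum_add_tsum_nat_add n
  set head := ∑ m ∈ range n, log (1 + q ^ m * t)
  set tail := ∑' i : ℕ, log (1 + q ^ (i + n) * t)
  have hhead_lo : ∑ m ∈ range n, (L - m * c) ≤ head := sum_le_sum fun m _ => by
    simpa [hc_def, sub_eq_add_neg] using posLog_add_mul_log_le_log_one_add hq0 hq1.le ht m
  have hhead_hi : head ≤ n * log 2 + ∑ m ∈ range n, (L - m * c) := by
    calc head ≤ ∑ m ∈ range n, (log 2 + (L - m * c)) := sum_le_sum fun m hm => by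
          have hmn : (m : ℝ) + 1 ≤ n := by exact_mod_cast mem_range.1 hm
          have hmc : 0 ≤ L + m * log q := by
            linarith [(le_div_iff₀ hc).1 (by linarith : (m : ℝ) ≤ L / c)]
          simpa [hc_def, sub_eq_add_neg] using log_one_add_pow_mul_le hq0 ht m hmc
      _ = n * log 2 + ∑ m ∈ range n, (L - m * c) := by
          rw [sum_add_distrib, sum_const, card_range, nsmul_eq_mul]
  have htail_lo : 0 ≤ tail :=
    tsum_nonneg fun i => log_nonneg (le_add_of_nonneg_right (by positivity))
  have htail_hi : tail ≤ 1 / (1 - q) := by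
    refine tsum_log_one_add_pow_add_mul_le hq0 hq1 ht.le ?_
    have hlog : log (q ^ n * t) ≤ 0 := by
      rw [log_mul (by positivity) ht.ne', log_pow]
      linarith [le_max_right 0 (log t), posLog_apply (x := t)]
    exact (log_nonpos_iff (by positivity)).1 hlog
  have hnlog2 : n * log 2 ≤ log 2 / c * L + log 2 := by
    calc n * log 2 ≤ (L / c + 1) * log 2 :=
          mul_le_mul_of_nonneg_right (by linarith) (log_nonneg one_le_two)
      _ = log 2 / c * L + log 2 := by ring
  rw [logQPoch, ← hsplit, abs_le]
  constructor <;> nlinarith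

lemma abs_posLog_mul_sub_log_le {s b : ℝ} (hs : 1 ≤ s) (hb : 0 < b) :
    |log⁺ (s * b) - log s| ≤ |log b| := by
  have h := abs_max_sub_max_le_abs (log s + log b) (log s) 0
  rwa [max_eq_left (log_nonneg hs), add_sub_cancel_left, ← log_mul (by linarith) hb.ne',
    max_comm, ← posLog_apply] at h

lemma exists_abs_logQPoch_mul_sub_le {q b : ℝ} (hq0 : 0 < q) (hq1 : q < 1) (hb : 0 < b) :
    ∃ K, ∀ s : ℝ, 1 ≤ s →
      |logQPoch q (s * b) - log s ^ 2 / (2 * -log q)| ≤ K * (1 + log s) := by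
  set c := -log q
  have hc : 0 < c := neg_pos.2 (log_neg hq0 hq1)
  set A := 1 / 2 + log 2 / c
  set B := c / 8 + log 2 + 1 / (1 - q)
  have hA : 0 ≤ A := by have := log_nonneg one_le_two; positivity
  have hB : 0 ≤ B := by
    have := log_nonneg one_le_two
    have : 0 < 1 - q := by linarith
    positivity
  set δ := |log b|
  refine ⟨A + B + A * δ + δ / c + δ ^ 2 / (2 * c), fun s hs => ?_⟩
  have hls : 0 ≤ log s := log_nonneg hs
  set L := log⁺ (s * b)
  have hL : |L - log s| ≤ δ := abs_posLog_mul_sub_log_le hs hb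
  have hL' : L ≤ log s + δ := by linarith [le_abs_self (L - log s)]
  have hS : |logQPoch q (s * b) - L ^ 2 / (2 * c)| ≤ A * L + B :=
    abs_logQPoch_sub_le hq0 hq1 (by positivity)
  have hsq : |L ^ 2 - log s ^ 2| ≤ δ * (2 * log s + δ) := by
    rw [sq_sub_sq, abs_mul, mul_comm]
    refine mul_le_mul hL ?_ (abs_nonneg _) (abs_nonneg _)
    rw [abs_of_nonneg (add_nonneg posLog_nonneg hls)]
    linarith
  have hsplit : logQPoch q (s * b) - log s ^ 2 / (2 * c)
      = (logQPoch q (s * b) - L ^ 2 / (2 * c)) + (L ^ 2 - log s ^ 2) / (2 * c) := by ring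
  calc |logQPoch q (s * b) - log s ^ 2 / (2 * c)|
      ≤ (A * L + B) + δ * (2 * log s + δ) / (2 * c) := by
        rw [hsplit]
        refine (abs_add_le _ _).trans (add_le_add hS ?_)
        rw [abs_div, abs_of_pos (by linarith : (0 : ℝ) < 2 * c)]
        exact div_le_div_of_nonneg_right hsq (by linarith)
    _ ≤ (A + δ / c) * log s + (A * δ + B + δ ^ 2 / (2 * c)) := by
        have : A * L ≤ A * (log s + δ) := mul_le_mul_of_nonneg_left hL' hA
        have : δ * (2 * log s + δ) / (2 * c) = δ / c * log s + δ ^ 2 / (2 * c) := by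
          field_simp
        linarith
    _ ≤ (A + B + A * δ + δ / c + δ ^ 2 / (2 * c)) * (1 + log s) := by
        have : 0 ≤ δ := abs_nonneg _
        have : 0 ≤ δ / c := by positivity
        have : 0 ≤ (B + A * δ + δ ^ 2 / (2 * c)) * log s := by positivity
        nlinarith

lemma sum_Icc_log_eq_log_factorial (j : ℕ) : ∑ l ∈ Icc 1 j, log l = log j ! := by
  rw [← prod_Ico_id_eq_factorial, Ico_add_one_right_eq_Icc, Nat.cast_prod,
    log_prod fun l hl => Nat.cast_ne_zero.2 (by simp only [mem_Icc] at hl; omega)]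

lemma abs_mul_log_sq_sub_sum_log_sq_le (j : ℕ) :
    |j * log j ^ 2 - ∑ l ∈ Icc 1 j, log l ^ 2| ≤ 2 * j * log j := by
  rcases Nat.eq_zero_or_pos j with rfl | hj
  · simp
  have hlogj : 0 ≤ log (j : ℝ) := log_nonneg (by exact_mod_cast hj)
  have hlog_le : ∀ l ∈ Icc 1 j, 0 ≤ log (l : ℝ) ∧ log (l : ℝ) ≤ log j := by
    intro l hl
    simp only [mem_Icc] at hl
    exact ⟨log_nonneg (by exact_mod_cast hl.1),
      log_le_log (by exact_mod_cast hl.1) (by exact_mod_cast hl.2)⟩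
  have hdiff : j * log j ^ 2 - ∑ l ∈ Icc 1 j, log l ^ 2
      = ∑ l ∈ Icc 1 j, (log j ^ 2 - log l ^ 2) := by
    rw [sum_sub_distrib, sum_const, Nat.card_Icc, nsmul_eq_mul, Nat.add_sub_cancel]
  have hstirling : j * log j - log j ! ≤ j := by
    linarith [Stirling.le_log_factorial_stirling hj.ne',
      log_nonneg (show (1 : ℝ) ≤ 2 * π by linarith [pi_gt_three])]
  rw [hdiff, abs_of_nonneg (sum_nonneg fun l hl => by nlinarith [hlog_le l hl])]
  calc ∑ l ∈ Icc 1 j, (log j ^ 2 - log l ^ 2)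
        ≤ ∑ l ∈ Icc 1 j, 2 * log j * (log j - log l) :=
        sum_le_sum fun l hl => by nlinarith [hlog_le l hl]
    _ = 2 * log j * (j * log j - log j !) := by
        rw [← mul_sum, sum_sub_distrib, sum_const, Nat.card_Icc, nsmul_eq_mul, Nat.add_sub_cancel,
          sum_Icc_log_eq_log_factorial]
    _ ≤ 2 * log j * j := mul_le_mul_of_nonneg_left hstirling (by positivity)
    _ = 2 * j * log j := by ring

lemma exists_abs_log_abs_rhoSeq_sub_le {q β : ℝ} (hq0 : 0 < q) (hq1 : q < 1) (hβ : β < 0) :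
    ∃ K, ∀ j : ℕ,
      |log |rhoSeq q β j| - j * log j ^ 2 / (2 * log q)| ≤ K * j * (1 + log j) := by
  obtain ⟨b, hb, rfl⟩ : ∃ b, 0 < b ∧ β = -b := ⟨-β, by linarith, by ring⟩
  have hc : 0 < -log q := neg_pos.2 (log_neg hq0 hq1)
  obtain ⟨K₀, hK₀⟩ := exists_abs_logQPoch_mul_sub_le hq0 hq1 hb
  have hK₀_nonneg : 0 ≤ K₀ := by simpa using (abs_nonneg _).trans (hK₀ 1 le_rfl)
  refine ⟨|log b| + K₀ + 1 / -log q, fun j => ?_⟩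
  have hlogj : 0 ≤ log (j : ℝ) := log_natCast_nonneg j
  have hsplit : log |rhoSeq q (-b) j| - j * log j ^ 2 / (2 * log q)
      = ∑ l ∈ Icc 1 j, (log b - (logQPoch q (l * b) - log l ^ 2 / (2 * -log q)))
        + (j * log j ^ 2 - ∑ l ∈ Icc 1 j, log l ^ 2) / (2 * -log q) := by
    rw [abs_rhoSeq hq0.le hq1 (by linarith), log_exp]
    simp only [neg_neg, sum_sub_distrib, ← sum_div]
    ring
  have hterm : ∀ l ∈ Icc 1 j, |log b - (logQPoch q (l * b) - log l ^ 2 / (2 * -log q))|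
      ≤ |log b| + K₀ * (1 + log j) := by
    intro l hl
    simp only [mem_Icc] at hl
    have hl₁ : (1 : ℝ) ≤ l := by exact_mod_cast hl.1
    have hlj : log (l : ℝ) ≤ log j := log_le_log (by linarith) (by exact_mod_cast hl.2)
    calc _ ≤ |log b| + |logQPoch q (l * b) - log l ^ 2 / (2 * -log q)| := abs_sub _ _
      _ ≤ |log b| + K₀ * (1 + log j) := by gcongr; exact (hK₀ l hl₁).trans (by gcongr)
  have hsum : |∑ l ∈ Icc 1 j, (log b - (logQPoch q (l * b) - log l ^ 2 / (2 * -log q)))|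
      ≤ j * (|log b| + K₀ * (1 + log j)) := by
    refine (abs_sum_le_sum_abs _ _).trans ((sum_le_sum hterm).trans_eq ?_)
    rw [sum_const, Nat.card_Icc, Nat.add_sub_cancel, nsmul_eq_mul]
  have hsq : |(j * log j ^ 2 - ∑ l ∈ Icc 1 j, log l ^ 2) / (2 * -log q)|
      ≤ 1 / -log q * (j * log j) := by
    rw [abs_div, abs_of_pos (by linarith : 0 < 2 * -log q)]
    calc _ ≤ 2 * j * log j / (2 * -log q) := by gcongr; exact abs_mul_log_sq_sub_sum_log_sq_le j
      _ = 1 / -log q * (j * log j) := by field_simp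
  rw [hsplit]
  refine (abs_add_le _ _).trans ((add_le_add hsum hsq).trans ?_)
  have : 0 ≤ 1 / -log q := by positivity
  nlinarith [mul_nonneg (mul_nonneg (abs_nonneg (log b)) j.cast_nonneg) hlogj,
    mul_nonneg this j.cast_nonneg]

lemma tendsto_natCast_mul_quadratic_log_atBot {a : ℝ} (ha : a < 0) (b c : ℝ) :
    Tendsto (fun j : ℕ => (j : ℝ) * ((a * log j + b) * log j + c)) atTop atBot := by
  have hquad : Tendsto (fun x : ℝ => (a * x + b) * x + c) atTop atBot :=
    tendsto_atBot_add_const_right _ c <|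
      (tendsto_atBot_add_const_right _ b (tendsto_id.const_mul_atTop_of_neg ha)).atBot_mul_atTop₀
        tendsto_id
  exact tendsto_natCast_atTop_atTop.atTop_mul_atBot₀
    (hquad.comp (tendsto_log_atTop.comp tendsto_natCast_atTop_atTop))

lemma one_add_log_le_three_mul_log {x : ℝ} (hx : 2 ≤ x) : 1 + log x ≤ 3 * log x := by
  linarith [log_le_log (by norm_num) hx, log_two_gt_d9]

/-- For `0 < q < 1` and `β < 0`, `ρ_j → 0` as `j → ∞`; in fact
`log |ρ_j| = j log²(j)/(2 log q) + O(j log j)` which tends to `-∞` since `log q < 0`. -/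
theorem rho_tendsto_zero (q β : ℝ) (hq0 : 0 < q) (hq1 : q < 1) (hβ : β < 0) :
    Filter.Tendsto (fun j : ℕ => rhoSeq q β j) Filter.atTop (nhds 0) ∧
    ∃ C > (0 : ℝ), ∀ j : ℕ, 2 ≤ j →
      |Real.log |rhoSeq q β j| - (j : ℝ) * (Real.log j) ^ 2 / (2 * Real.log q)|
        ≤ C * (j : ℝ) * Real.log j := by
  obtain ⟨K, hK⟩ := exists_abs_log_abs_rhoSeq_sub_le hq0 hq1 hβ
  have hK_nonneg : 0 ≤ K := by simpa using (abs_nonneg _).trans (hK 1)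
  constructor
  · have hlog : Tendsto (fun j => log |rhoSeq q β j|) atTop atBot := by
      refine tendsto_atBot_mono (fun j => ?_)
        (tendsto_natCast_mul_quadratic_log_atBot (one_div_neg.2 (by linarith [log_neg hq0 hq1]) :
          1 / (2 * log q) < 0) K K)
      have := (abs_le.1 (hK j)).2
      have : (j : ℝ) * ((1 / (2 * log q) * log j + K) * log j + K)
          = j * log j ^ 2 / (2 * log q) + K * j * (1 + log j) := by ring
      linarith
    rw [tendsto_zero_iff_abs_tendsto_zero]
    refine (tendsto_exp_atBot.comp hlog).congr fun j => exp_log ?_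
    show 0 < |rhoSeq q β j|
    rw [abs_rhoSeq hq0.le hq1 hβ]
    exact exp_pos _
  · refine ⟨3 * K + 1, by positivity, fun j hj => (hK j).trans ?_⟩
    have h3 := one_add_log_le_three_mul_log (show (2 : ℝ) ≤ j by exact_mod_cast hj)
    have hlogj : 0 ≤ log (j : ℝ) := log_natCast_nonneg j
    calc K * j * (1 + log j) ≤ K * j * (3 * log j) := by gcongr
      _ ≤ (3 * K + 1) * j * log j := by
        nlinarith [mul_nonneg (j.cast_nonneg : (0 : ℝ) ≤ j) hlogj]
end

section
/- Let φ_k(x) = β x^{1-k} ∑_{j=0}^∞ (ρ_{j-k}/j!)(x/β)^j where ρ_i are defined from r_i = βH_q(iβ) by ρ_i = ρ_{i-1} r_i for all i ∈ ℤ, ρ_0 = 1. Then for every integer k, β(𝒟 + k - 1)φ_k = φ_{k-1}, where 𝒟 = x d/dx is the Euler operator. -/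
/-- `r_i = β H_q(iβ)`, `i ∈ ℤ`. -/
noncomputable def rcoef (q β : ℝ) (i : ℤ) : ℝ := β * Hq q ((i : ℝ) * β)

/-- `ρ_0 = 1`, `ρ_i = ρ_{i-1} r_i` for all `i ∈ ℤ`. -/
noncomputable def rho (q β : ℝ) (i : ℤ) : ℝ :=
  if 0 ≤ i then ∏ l ∈ Finset.Icc 1 i.toNat, rcoef q β (l : ℤ)
  else (∏ l ∈ Finset.range (-i).toNat, rcoef q β (-(l : ℤ)))⁻¹

/-- `φ_k(x) = β x^{1-k} ∑_{j≥0} (ρ_{j-k}/j!)(x/β)^j`. -/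
noncomputable def phi (q β : ℝ) (k : ℤ) (x : ℂ) : ℂ :=
  (β : ℂ) * x ^ (1 - k) *
    ∑' j : ℕ, ((rho q β ((j : ℤ) - k) / (j.factorial : ℝ) : ℝ) : ℂ) * (x / (β : ℂ)) ^ j

/-!
Write `S_k(x) = ∑ₙ ρ_{n-k} β⁻ⁿ xⁿ / n!`, so that `φ_k(x) = β x^{1-k} S_k(x)`. For `y ≤ 0` every
factor of `H_q(y)` lies in `(0, 1]`, so `|r_i| ≤ |β|` for `i ≥ 0` and `|ρ_i| ≤ |β|^i`; hence the
coefficients `ρ_{n-k} β⁻ⁿ` are bounded, `S_k` is entire and can be differentiated termwise. Shifting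
the index gives `S_k' = β⁻¹ S_{k-1}`, so `x φ_k' = (1 - k) φ_k + x^{2-k} S_{k-1}`, and
`β x^{2-k} S_{k-1} = φ_{k-1}`.
-/

open Nat Filter Asymptotics

noncomputable def egf (a : ℕ → ℂ) (z : ℂ) : ℂ := ∑' n, a n / n ! * z ^ n

theorem egf_const_mul (c : ℂ) (a : ℕ → ℂ) (z : ℂ) :
    egf (fun n => c * a n) z = c * egf a z := by
  rw [egf, egf, ← tsum_mul_left]
  exact tsum_congr fun n => by ring

theorem factorial_succ_div_mul (c w : ℂ) (m : ℕ) :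
    c / (m + 1)! * (((m + 1 : ℕ) : ℂ) * w ^ m) = c / m ! * w ^ m := by
  push_cast [Nat.factorial_succ]
  field_simp

theorem hasDerivAt_egf {a : ℕ → ℂ} {C : ℝ} (ha : ∀ n, ‖a n‖ ≤ C) (z : ℂ) :
    HasDerivAt (egf a) (egf (fun n => a (n + 1)) z) z := by
  set R := ‖z‖ + 1
  have hterm : ∀ n w, HasDerivAt (fun w : ℂ => a n / n ! * w ^ n)
      (a n / n ! * (n * w ^ (n - 1))) w := fun n w => (hasDerivAt_pow n w).const_mul _
  have hbound : ∀ n, ∀ w ∈ Metric.ball (0 : ℂ) R,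
      ‖a n / n ! * (n * w ^ (n - 1))‖ ≤ C * (R ^ (n - 1) / (n - 1)!) := by
    rintro (_ | m) w hw
    · simpa using (norm_nonneg _).trans (ha 0)
    · rw [Nat.add_sub_cancel, factorial_succ_div_mul, norm_mul, norm_div, norm_pow,
        Complex.norm_natCast, div_mul_eq_mul_div, mul_div_assoc]
      have hw : ‖w‖ ≤ R := by simpa [R] using (mem_ball_zero_iff.mp hw).le
      gcongr
      · exact (norm_nonneg _).trans (ha 0)
      · exact ha _
  have hsummable : Summable fun n => C * (R ^ (n - 1) / (n - 1)!) := by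
    rw [← summable_nat_add_iff 1]
    simpa using (Real.summable_pow_div_factorial R).mul_left C
  have hsum0 : Summable fun n => a n / n ! * (0 : ℂ) ^ n :=
    summable_of_ne_finset_zero (s := {0}) fun n hn => by
      simp [zero_pow (by simpa using hn : n ≠ 0)]
  have hz : z ∈ Metric.ball (0 : ℂ) R := by simp [R]
  have hderiv := hasDerivAt_tsum_of_isPreconnected hsummable Metric.isOpen_ball
    (convex_ball 0 R).isPreconnected (fun n w _ => hterm n w) hbound
    (Metric.mem_ball_self (by positivity)) hsum0 hz
  have hsum' : Summable fun n => a n / n ! * (n * z ^ (n - 1)) :=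
    .of_norm_bounded hsummable fun n => hbound n z hz
  have hsucc : egf (fun n => a (n + 1)) z = ∑' n, a n / n ! * (n * z ^ (n - 1)) := by
    rw [hsum'.tsum_eq_zero_add, egf]
    simp only [Nat.cast_zero, zero_mul, mul_zero, zero_add, Nat.add_sub_cancel,
      factorial_succ_div_mul]
  exact hsucc ▸ hderiv

theorem abs_Hq_le_one {q y : ℝ} (hq : 0 ≤ q) (hy : y ≤ 0) : |Hq q y| ≤ 1 := by
  have hfactor : ∀ m : ℕ, 1 ≤ 1 - q ^ m * y := fun m => by
    nlinarith [pow_nonneg hq m]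
  have hnonneg : ∀ m : ℕ, 0 ≤ (1 - q ^ m * y)⁻¹ := fun m =>
    inv_nonneg.mpr (zero_le_one.trans (hfactor m))
  rw [Hq, abs_of_nonneg (tprod_nonneg hnonneg)]
  by_cases h : Multipliable fun m : ℕ => (1 - q ^ m * y)⁻¹
  · exact le_of_tendsto' h.hasProd fun s => Finset.prod_le_one (fun m _ => hnonneg m)
      fun m _ => inv_le_one_of_one_le₀ (hfactor m)
  · rw [tprod_eq_one_of_not_multipliable h]

theorem abs_rcoef_le {q β : ℝ} (hq : 0 ≤ q) (hβ : β ≤ 0) (n : ℕ) : |rcoef q β n| ≤ |β| := by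
  rw [rcoef, abs_mul]
  exact mul_le_of_le_one_right (abs_nonneg β)
    (abs_Hq_le_one hq (mul_nonpos_of_nonneg_of_nonpos n.cast_nonneg hβ))

theorem abs_rho_natCast_le {q β : ℝ} (hq : 0 ≤ q) (hβ : β ≤ 0) (n : ℕ) :
    |rho q β n| ≤ |β| ^ n := by
  rw [rho, if_pos n.cast_nonneg, Int.toNat_natCast, Finset.abs_prod]
  calc ∏ l ∈ Finset.Icc 1 n, |rcoef q β l| ≤ ∏ _l ∈ Finset.Icc 1 n, |β| :=
        Finset.prod_le_prod (fun _ _ => abs_nonneg _) fun l _ => abs_rcoef_le hq hβ l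
    _ = |β| ^ n := by simp

noncomputable def phiCoeff (q β : ℝ) (k : ℤ) (n : ℕ) : ℂ := (rho q β (n - k) : ℂ) / β ^ n

theorem exists_bound_phiCoeff {q β : ℝ} (hq : 0 ≤ q) (hβ : β < 0) (k : ℤ) :
    ∃ C, ∀ n, ‖phiCoeff q β k n‖ ≤ C := by
  have hβ0 : |β| ≠ 0 := abs_ne_zero.mpr hβ.ne
  have hbig : phiCoeff q β k =O[cofinite] fun _ => (1 : ℝ) := by
    refine .of_bound (|β| ^ (-k)) ?_
    rw [Nat.cofinite_eq_atTop]
    filter_upwards [eventually_ge_atTop k.toNat] with n hn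
    obtain ⟨m, hm⟩ : ∃ m : ℕ, (n : ℤ) - k = m := ⟨((n : ℤ) - k).toNat, by omega⟩
    have hpow : |β| ^ n = |β| ^ m * |β| ^ k := by
      rw [← zpow_natCast, ← zpow_natCast, ← zpow_add₀ hβ0, ← hm, sub_add_cancel]
    simp only [phiCoeff, hm, norm_div, norm_pow, Complex.norm_real, Real.norm_eq_abs, norm_one,
      mul_one]
    rw [hpow, zpow_neg, ← div_div, ← one_div]
    exact div_le_div_of_nonneg_right
      (div_le_one_of_le₀ (abs_rho_natCast_le hq hβ.le m) (by positivity)) (by positivity)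
  obtain ⟨C, hC⟩ := (isBigO_cofinite_iff (by simp)).mp hbig
  exact ⟨C, fun n => by simpa using hC n⟩

theorem phi_eq_egf (q β : ℝ) (k : ℤ) (x : ℂ) :
    phi q β k x = β * x ^ (1 - k) * egf (phiCoeff q β k) x := by
  simp only [phi, egf, phiCoeff]
  congr 1
  refine tsum_congr fun n => ?_
  push_cast
  ring

theorem phiCoeff_succ (q β : ℝ) (k : ℤ) (n : ℕ) :
    phiCoeff q β k (n + 1) = (β : ℂ)⁻¹ * phiCoeff q β (k - 1) n := by
  rw [phiCoeff, phiCoeff, show ((n + 1 : ℕ) : ℤ) - k = n - (k - 1) by push_cast; ring]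
  ring

theorem hasDerivAt_egf_phiCoeff {q β : ℝ} (hq : 0 ≤ q) (hβ : β < 0) (k : ℤ) (x : ℂ) :
    HasDerivAt (egf (phiCoeff q β k)) ((β : ℂ)⁻¹ * egf (phiCoeff q β (k - 1)) x) x := by
  obtain ⟨C, hC⟩ := exists_bound_phiCoeff hq hβ k
  simpa only [phiCoeff_succ, egf_const_mul] using hasDerivAt_egf hC x

theorem phi_euler_recursion_general (q β : ℝ) (hq0 : 0 < q) (hβ : β < 0)
    (k : ℤ) (x : ℂ) (hx : x ≠ 0) :
    (β : ℂ) * (x * deriv (phi q β k) x + ((k : ℂ) - 1) * phi q β k x)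
      = phi q β (k - 1) x := by
  have hβ0 : (β : ℂ) ≠ 0 := Complex.ofReal_ne_zero.mpr hβ.ne
  have hphi : HasDerivAt (phi q β k)
      (β * ((1 - k : ℤ) * x ^ (1 - k - 1)) * egf (phiCoeff q β k) x
        + β * x ^ (1 - k) * ((β : ℂ)⁻¹ * egf (phiCoeff q β (k - 1)) x)) x := by
    rw [funext (phi_eq_egf q β k)]
    exact ((hasDerivAt_zpow (1 - k) x (.inl hx)).const_mul _).mul
      (hasDerivAt_egf_phiCoeff hq0.le hβ k x)
  rw [hphi.deriv, phi_eq_egf, phi_eq_egf, zpow_sub_one₀ hx, sub_sub_eq_add_sub,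
    add_sub_right_comm, zpow_add_one₀ hx]
  push_cast
  field_simp
  ring

/-- The recursion `β (𝒟 + k - 1) φ_k = φ_{k-1}` where `𝒟 = x d/dx` is the Euler
operator, for every integer `k`. -/
theorem phi_euler_recursion (q β : ℝ) (hq0 : 0 < q) (hq1 : q < 1) (hβ : β < 0)
    (hgen : ∀ i : ℤ, Hq q ((i : ℝ) * β) ≠ 0) (k : ℤ) (x : ℂ) (hx : x ≠ 0) :
    (β : ℂ) * (x * deriv (phi q β k) x + ((k : ℂ) - 1) * phi q β k x)
      = phi q β (k - 1) x :=
  phi_euler_recursion_general q β hq0 hβ k x hx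
end

section
/- Andréief's identity: for integrable functions f₁,…,fₙ, g₁,…,gₙ on a measure space (C, dμ), one has (1/n!) ∫⋯∫ det(f_i(ζ_j))_{i,j} det(g_i(ζ_j))_{i,j} ∏_k dμ(ζ_k) = det(∫ f_i(ζ)g_j(ζ) dμ(ζ))_{i,j}. -/
/-!
Expanding both determinants, the integrand is the signed double sum over permutations `σ, τ` of
`∏ⱼ f_{σ j}(ζⱼ) g_{τ j}(ζⱼ)`. By Fubini each term integrates to `∏ⱼ A_{σ j, τ j}` with
`A = (∫ f_i g_j dμ)`, and after the substitution `τ = π σ` every inner sum over `τ` is `det A`,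
so the double sum is `n! · det A`.
-/

open MeasureTheory Equiv

namespace Matrix

variable {ι R : Type*} [Fintype ι] [DecidableEq ι] [CommRing R]

theorem det_mul_det_eq_sum_sum (M N : Matrix ι ι R) :
    M.det * N.det = ∑ σ : Perm ι, ∑ τ : Perm ι,
      (((Perm.sign σ * Perm.sign τ : ℤˣ) : ℤ) : R) * ∏ j, M (σ j) j * N (τ j) j := by
  rw [det_apply', det_apply', Finset.sum_mul_sum]
  refine Finset.sum_congr rfl fun σ _ => Finset.sum_congr rfl fun τ _ => ?_
  rw [Finset.prod_mul_distrib]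
  push_cast
  ring

theorem sum_sign_mul_sign_mul_prod_perm_eq_det (A : Matrix ι ι R) (σ : Perm ι) :
    ∑ τ : Perm ι, (((Perm.sign σ * Perm.sign τ : ℤˣ) : ℤ) : R) * ∏ j, A (σ j) (τ j) = A.det := by
  rw [← det_transpose, det_apply', ← Equiv.sum_comp (Equiv.mulRight σ)]
  refine Finset.sum_congr rfl fun π _ => ?_
  have hsign : Perm.sign σ * Perm.sign (π * σ) = Perm.sign π := by
    rw [Perm.sign_mul, mul_comm (Perm.sign π), ← mul_assoc, Int.units_mul_self, one_mul]
  rw [coe_mulRight, hsign]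
  exact congrArg _ (Equiv.prod_comp σ fun k => A k (π k))

theorem sum_sum_sign_mul_sign_mul_prod_eq_card_mul_det (A : Matrix ι ι R) :
    ∑ σ : Perm ι, ∑ τ : Perm ι, (((Perm.sign σ * Perm.sign τ : ℤˣ) : ℤ) : R) *
      ∏ j, A (σ j) (τ j) = (Fintype.card (Perm ι) : R) * A.det := by
  simp only [sum_sign_mul_sign_mul_prod_perm_eq_det, Finset.sum_const, Finset.card_univ,
    nsmul_eq_mul]

end Matrix

theorem MeasureTheory.integral_det_mul_det_eq_card_mul_det {ι 𝕜 C : Type*} [Fintype ι]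
    [DecidableEq ι] [RCLike 𝕜] [MeasurableSpace C] (μ : Measure C) [SigmaFinite μ]
    (f g : ι → C → 𝕜) (hint : ∀ i j, Integrable (fun ζ => f i ζ * g j ζ) μ) :
    ∫ ζ : ι → C, (Matrix.of fun i j => f i (ζ j)).det * (Matrix.of fun i j => g i (ζ j)).det
        ∂(Measure.pi fun _ => μ)
      = (Fintype.card (Perm ι) : 𝕜) * (Matrix.of fun i j => ∫ ζ, f i ζ * g j ζ ∂μ).det := by
  have hprod : ∀ σ τ : Perm ι, Integrable (fun ζ : ι → C => ∏ j, f (σ j) (ζ j) * g (τ j) (ζ j))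
      (Measure.pi fun _ => μ) := fun σ τ =>
    Integrable.fintype_prod (f := fun j z => f (σ j) z * g (τ j) z) fun j => hint (σ j) (τ j)
  have hfubini : ∀ σ τ : Perm ι, ∫ ζ : ι → C, ∏ j, f (σ j) (ζ j) * g (τ j) (ζ j)
      ∂(Measure.pi fun _ => μ) = ∏ j, ∫ ζ, f (σ j) ζ * g (τ j) ζ ∂μ := fun σ τ =>
    integral_fintype_prod_eq_prod fun j z => f (σ j) z * g (τ j) z
  simp_rw [Matrix.det_mul_det_eq_sum_sum, Matrix.of_apply]
  rw [integral_finsetSum _ fun σ _ => integrable_finsetSum _ fun τ _ => (hprod σ τ).const_mul _]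
  refine (Finset.sum_congr rfl fun σ _ => ?_).trans
    (Matrix.sum_sum_sign_mul_sign_mul_prod_eq_card_mul_det _)
  rw [integral_finsetSum _ fun τ _ => (hprod σ τ).const_mul _]
  refine Finset.sum_congr rfl fun τ _ => ?_
  rw [integral_const_mul, hfubini]
  rfl

/-- Andréief's identity: for functions `f₁,…,fₙ, g₁,…,gₙ` on a measure space `(C, μ)`
with all products `f_i g_j` integrable,
`(1/n!) ∫⋯∫ det(f_i(ζ_j)) det(g_i(ζ_j)) ∏_k dμ(ζ_k) = det(∫ f_i g_j dμ)`. -/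
theorem andreief_identity {C : Type*} [MeasurableSpace C] (μ : Measure C) [SigmaFinite μ]
    (n : ℕ) (f g : Fin n → C → ℂ)
    (hint : ∀ i j : Fin n, Integrable (fun ζ => f i ζ * g j ζ) μ) :
    (n.factorial : ℂ)⁻¹ *
        ∫ ζ : Fin n → C,
          Matrix.det (Matrix.of fun i j : Fin n => f i (ζ j)) *
            Matrix.det (Matrix.of fun i j : Fin n => g i (ζ j))
          ∂(Measure.pi fun _ => μ)
      = Matrix.det (Matrix.of fun i j : Fin n => ∫ ζ, f i ζ * g j ζ ∂μ) := by
  rw [integral_det_mul_det_eq_card_mul_det μ f g hint, Fintype.card_perm, Fintype.card_fin,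
    inv_mul_cancel_left₀ (by exact_mod_cast n.factorial_ne_zero)]
end

section
/- For 0 ≤ t, one has 0 < 1/2 − 1/t + 1/(e^t − 1) ≤ t/12 for all t > 0 (with the convention that the expression extends continuously to 0 at t = 0). -/
/-!
Multiplying by `2t(eᵗ - 1)` resp. `12t(eᵗ - 1)`, the bounds become `0 < (t - 2) eᵗ + t + 2` and
`0 < (t² - 6t + 12) eᵗ - t² - 6t - 12` (Padé bounds for `eᵗ`). Both are of the form
`p(t) eᵗ - q(t)`, vanish at `0`, and have derivatives of the same form; differentiating repeatedly
ends at `t eᵗ` resp. `t² eᵗ`, positive for `t > 0`, and positivity climbs back up the chain.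
-/

open Real Set

theorem strictMonoOn_Ici_of_hasDerivAt_pos {f f' : ℝ → ℝ} {a : ℝ}
    (hf : ∀ x, HasDerivAt f (f' x) x) (hf' : ∀ x, a < x → 0 < f' x) :
    StrictMonoOn f (Ici a) :=
  strictMonoOn_of_hasDerivWithinAt_pos (convex_Ici a)
    (fun x _ ↦ (hf x).continuousAt.continuousWithinAt)
    (fun x _ ↦ (hf x).hasDerivWithinAt)
    (fun x hx ↦ hf' x (by rwa [interior_Ici] at hx))

theorem pos_of_hasDerivAt_pos {f f' : ℝ → ℝ} (hf : ∀ x, HasDerivAt f (f' x) x) (hf0 : f 0 = 0)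
    (hf' : ∀ x, 0 < x → 0 < f' x) {t : ℝ} (ht : 0 < t) : 0 < f t :=
  hf0 ▸ strictMonoOn_Ici_of_hasDerivAt_pos hf hf' self_mem_Ici ht.le ht

theorem sub_one_mul_exp_add_one_pos {t : ℝ} (ht : 0 < t) : 0 < (t - 1) * exp t + 1 := by
  have hderiv (x : ℝ) : HasDerivAt (fun x ↦ (x - 1) * exp x + 1) (x * exp x) x :=
    ((((hasDerivAt_id x).sub_const 1).mul (hasDerivAt_exp x)).add_const 1).congr_deriv
      (by simp only [id]; ring)
  exact pos_of_hasDerivAt_pos hderiv (by simp) (fun x hx ↦ by positivity) ht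

theorem sub_two_mul_exp_add_add_two_pos {t : ℝ} (ht : 0 < t) : 0 < (t - 2) * exp t + t + 2 := by
  have hderiv (x : ℝ) :
      HasDerivAt (fun x ↦ (x - 2) * exp x + x + 2) ((x - 1) * exp x + 1) x :=
    (((((hasDerivAt_id x).sub_const 2).mul (hasDerivAt_exp x)).add
      (hasDerivAt_id x)).add_const 2).congr_deriv (by simp only [id]; ring)
  exact pos_of_hasDerivAt_pos hderiv (by simp) (fun x ↦ sub_one_mul_exp_add_one_pos) ht

theorem sq_sub_two_mul_add_two_mul_exp_sub_two_pos {t : ℝ} (ht : 0 < t) :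
    0 < (t ^ 2 - 2 * t + 2) * exp t - 2 := by
  have hderiv (x : ℝ) :
      HasDerivAt (fun x ↦ (x ^ 2 - 2 * x + 2) * exp x - 2) (x ^ 2 * exp x) x :=
    (((((hasDerivAt_pow 2 x).sub ((hasDerivAt_id x).const_mul 2)).add_const 2).mul
      (hasDerivAt_exp x)).sub_const 2).congr_deriv (by simp only [Pi.sub_apply, id]; ring)
  exact pos_of_hasDerivAt_pos hderiv (by simp) (fun x hx ↦ by positivity) ht

theorem sq_sub_four_mul_add_six_mul_exp_sub_two_mul_sub_six_pos {t : ℝ} (ht : 0 < t) :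
    0 < (t ^ 2 - 4 * t + 6) * exp t - 2 * t - 6 := by
  have hderiv (x : ℝ) : HasDerivAt (fun x ↦ (x ^ 2 - 4 * x + 6) * exp x - 2 * x - 6)
      ((x ^ 2 - 2 * x + 2) * exp x - 2) x :=
    ((((((hasDerivAt_pow 2 x).sub ((hasDerivAt_id x).const_mul 4)).add_const 6).mul
      (hasDerivAt_exp x)).sub ((hasDerivAt_id x).const_mul 2)).sub_const 6).congr_deriv
      (by simp only [Pi.sub_apply, id]; ring)
  exact pos_of_hasDerivAt_pos hderiv (by simp)
    (fun x ↦ sq_sub_two_mul_add_two_mul_exp_sub_two_pos) ht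

theorem sq_sub_six_mul_add_twelve_mul_exp_sub_sq_sub_six_mul_sub_twelve_pos {t : ℝ}
    (ht : 0 < t) : 0 < (t ^ 2 - 6 * t + 12) * exp t - t ^ 2 - 6 * t - 12 := by
  have hderiv (x : ℝ) : HasDerivAt (fun x ↦ (x ^ 2 - 6 * x + 12) * exp x - x ^ 2 - 6 * x - 12)
      ((x ^ 2 - 4 * x + 6) * exp x - 2 * x - 6) x :=
    (((((((hasDerivAt_pow 2 x).sub ((hasDerivAt_id x).const_mul 6)).add_const 12).mul
      (hasDerivAt_exp x)).sub (hasDerivAt_pow 2 x)).sub ((hasDerivAt_id x).const_mul 6)).sub_const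
      12).congr_deriv (by simp only [Pi.sub_apply, id]; ring)
  exact pos_of_hasDerivAt_pos hderiv (by simp)
    (fun x ↦ sq_sub_four_mul_add_six_mul_exp_sub_two_mul_sub_six_pos) ht

/-- The elementary Binet-kernel inequality: for all `t > 0`,
`0 < 1/2 - 1/t + 1/(e^t - 1) ≤ t/12`. -/
theorem binet_kernel_bound (t : ℝ) (ht : 0 < t) :
    0 < 1 / 2 - 1 / t + 1 / (Real.exp t - 1) ∧
      1 / 2 - 1 / t + 1 / (Real.exp t - 1) ≤ t / 12 := by
  have hexp : 0 < exp t - 1 := sub_pos.2 (one_lt_exp_iff.2 ht)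
  have hlower : 1 / 2 - 1 / t + 1 / (exp t - 1) =
      ((t - 2) * exp t + t + 2) / (2 * t * (exp t - 1)) := by
    field_simp
    ring
  have hupper : t / 12 - (1 / 2 - 1 / t + 1 / (exp t - 1)) =
      ((t ^ 2 - 6 * t + 12) * exp t - t ^ 2 - 6 * t - 12) / (12 * t * (exp t - 1)) := by
    field_simp
    ring
  constructor
  · rw [hlower]
    exact div_pos (sub_two_mul_exp_add_add_two_pos ht) (by positivity)
  · rw [← sub_nonneg, hupper]
    exact (div_pos (sq_sub_six_mul_add_twelve_mul_exp_sub_sq_sub_six_mul_sub_twelve_pos ht)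
      (by positivity)).le
end

section
/- The closed-form evaluation: for q ∈ (0,1), β < 0, and real z > 0, ∫_0^∞ [β^{-1}q^{-ζ} log(1 − zβq^ζ) + z] dζ = (z/log q)·(1 − (1 − 1/(βz)) log(1 − βz)). -/
/-!
With `c = z β`, the integrand is `β⁻¹ (q^{-ζ} log(1 - c q^ζ) + c)`, and
`q^{-ζ} log(1 - c q^ζ) + c` is the derivative of `(c - q^{-ζ}) log(1 - c q^ζ) / log q`.
This antiderivative tends to `c / log q` at infinity because `x log(1 - c/x) → -c`, and the
integrand has constant sign (`log(1 - x) ≤ -x`), so the improper fundamental theorem of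
calculus applies on `(0, ∞)`.
-/

open Real Filter MeasureTheory Set Topology

section

variable {q : ℝ} (c : ℝ)

lemma hasDerivAt_sub_rpow_neg_mul_log_one_sub (hq : 0 < q) {ζ : ℝ} (h : 1 - c * q ^ ζ ≠ 0) :
    HasDerivAt (fun x : ℝ => (c - q ^ (-x)) * log (1 - c * q ^ x))
      (log q * (q ^ (-ζ) * log (1 - c * q ^ ζ) + c)) ζ := by
  have hpow : HasDerivAt (fun x : ℝ => q ^ x) (q ^ ζ * log q) ζ :=
    (hasStrictDerivAt_const_rpow hq ζ).hasDerivAt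
  have hpow_neg : HasDerivAt (fun x : ℝ => q ^ (-x)) (q ^ (-ζ) * log q * (-1)) ζ :=
    ((hasStrictDerivAt_const_rpow hq (-ζ)).hasDerivAt).comp ζ (hasDerivAt_neg ζ)
  have hlog := ((hpow.const_mul c).const_sub 1).log h
  refine ((hpow_neg.const_sub c).mul hlog).congr_deriv ?_
  have hq' : q ^ ζ ≠ 0 := (rpow_pos_of_pos hq ζ).ne'
  have hcancel : (c - (q ^ ζ)⁻¹) * -(c * (q ^ ζ * log q)) = c * log q * (1 - c * q ^ ζ) := by
    field_simp
    ring
  rw [rpow_neg hq.le, mul_div_assoc', hcancel, mul_div_cancel_right₀ _ h]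
  ring

lemma rpow_neg_mul_log_one_sub_add_nonpos (hq : 0 < q) {ζ : ℝ} (h : 0 < 1 - c * q ^ ζ) :
    q ^ (-ζ) * log (1 - c * q ^ ζ) + c ≤ 0 := by
  have hlog : log (1 - c * q ^ ζ) ≤ -(c * q ^ ζ) := by linarith [log_le_sub_one_of_pos h]
  calc q ^ (-ζ) * log (1 - c * q ^ ζ) + c
      ≤ q ^ (-ζ) * -(c * q ^ ζ) + c := by gcongr
    _ = 0 := by rw [rpow_neg hq.le]; field_simp; ring

lemma tendsto_sub_rpow_neg_mul_log_one_sub (hq0 : 0 < q) (hq1 : q < 1) :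
    Tendsto (fun x : ℝ => (c - q ^ (-x)) * log (1 - c * q ^ x)) atTop (𝓝 c) := by
  have hpow : Tendsto (fun x : ℝ => q ^ x) atTop (𝓝 0) :=
    tendsto_rpow_atTop_of_base_lt_one q (by linarith) hq1
  have hpow_neg : Tendsto (fun x : ℝ => q ^ (-x)) atTop atTop :=
    (tendsto_rpow_atBot_of_base_lt_one q hq0 hq1).comp tendsto_neg_atTop_atBot
  have hlog : Tendsto (fun x : ℝ => log (1 - c * q ^ x)) atTop (𝓝 0) := by
    have hcont : ContinuousAt (fun t : ℝ => log (1 - c * t)) 0 :=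
      (continuousAt_const.sub (continuousAt_const.mul continuousAt_id)).log (by simp)
    simpa [Function.comp_def] using hcont.tendsto.comp hpow
  have hslope : Tendsto (fun x : ℝ => q ^ (-x) * log (1 - c * q ^ x)) atTop (𝓝 (-c)) := by
    refine ((tendsto_mul_log_one_add_div_atTop (-c)).comp hpow_neg).congr fun x => ?_
    simp only [Function.comp_apply, rpow_neg hq0.le]
    congr 3
    field_simp
  simpa [sub_mul] using (hlog.const_mul c).sub hslope

lemma integral_Ioi_rpow_neg_mul_log_one_sub_add (hq0 : 0 < q) (hq1 : q < 1) (hc : c ≤ 0) :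
    ∫ ζ in Ioi (0 : ℝ), (q ^ (-ζ) * log (1 - c * q ^ ζ) + c)
      = (c - (c - 1) * log (1 - c)) / log q := by
  have hL : log q ≠ 0 := (log_neg hq0 hq1).ne
  have hpos : ∀ ζ : ℝ, 0 < 1 - c * q ^ ζ := fun ζ => by
    nlinarith [rpow_pos_of_pos hq0 ζ]
  rw [integral_Ioi_of_hasDerivAt_of_nonpos'
    (g := fun x => (c - q ^ (-x)) * log (1 - c * q ^ x) / log q)
    (fun ζ _ => ((hasDerivAt_sub_rpow_neg_mul_log_one_sub c hq0 (hpos ζ).ne').div_const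
      _).congr_deriv (mul_div_cancel_left₀ _ hL))
    (fun ζ _ => rpow_neg_mul_log_one_sub_add_nonpos c hq0 (hpos ζ))
    ((tendsto_sub_rpow_neg_mul_log_one_sub c hq0 hq1).div_const _)]
  simp only [neg_zero, rpow_zero, mul_one]
  ring

end

/-- Closed-form evaluation: for `0 < q < 1`, `β < 0`, `z > 0`,
`∫_0^∞ [β⁻¹ q^{-ζ} log(1 - zβq^ζ) + z] dζ = (z/log q)(1 - (1 - 1/(βz)) log(1 - βz))`. -/
theorem integral_log_Hq_leading (q β z : ℝ) (hq0 : 0 < q) (hq1 : q < 1)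
    (hβ : β < 0) (hz : 0 < z) :
    ∫ ζ in Set.Ioi (0 : ℝ),
        (β⁻¹ * q ^ (-ζ) * Real.log (1 - z * β * q ^ ζ) + z)
      = z / Real.log q * (1 - (1 - 1 / (β * z)) * Real.log (1 - β * z)) := by
  have hβ' : β ≠ 0 := hβ.ne
  have hintegrand : ∀ ζ : ℝ, β⁻¹ * q ^ (-ζ) * log (1 - z * β * q ^ ζ) + z
      = β⁻¹ * (q ^ (-ζ) * log (1 - z * β * q ^ ζ) + z * β) := fun ζ => by
    field_simp
  simp_rw [hintegrand]
  rw [integral_const_mul, integral_Ioi_rpow_neg_mul_log_one_sub_add _ hq0 hq1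
    (mul_nonpos_of_nonneg_of_nonpos hz.le hβ.le), mul_comm β z]
  field_simp
end
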